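/- arXiv:1209.4766 — 2 statements merged into one kernel-verified Lean document; each statement's English description precedes it below -/
import Mathlib

section
/- If a sequence φ_n ∈ 𝓒 w-converges to some φ ∈ L²(E, ν), then the sequence of norms ⟨φ_n, φ_n⟩_n, n ∈ ℕ, is bounded. -/
open MeasureTheory Filter Topology

noncomputable section

namespace Mosco

variable {E : Type*} [MeasurableSpace E]

/-- The inner product of two real-valued functions with respect to a measure,
`⟨φ, ψ⟩ = ∫ φ ψ dμ`. -/
def ip (μ : Measure E) (φ ψ : E → ℝ) : ℝ := ∫ x, φ x * ψ x ∂μ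

/-- The framework of Section 2.1: mutually singular probability measures `ν n`, `n : ℕ`
(`ν 0` playing the role of the limit measure `ν`), such that `L²(E, ν 0)` is separable,
together with disjoint sets `En n` carrying `ν n`, and a linear subset `F = 𝓕 ⊆ 𝓓`
which is dense in `L²(E, ν 0)`. -/
structure Frame (E : Type*) [MeasurableSpace E] where
  ν : ℕ → Measure E
  prob : ∀ n, IsProbabilityMeasure (ν n)
  singular : ∀ m n, m ≠ n → (ν m).MutuallySingular (ν n)
  separableL2 : TopologicalSpace.SeparableSpace (Lp ℝ 2 (ν 0))
  En : ℕ → Set E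
  measEn : ∀ n, MeasurableSet (En n)
  disjEn : ∀ m n, m ≠ n → Disjoint (En m) (En n)
  nullEn : ∀ n, ν n (En n)ᶜ = 0
  F : Set (E → ℝ)
  F_measurable : ∀ φ ∈ F, Measurable φ
  F_memL2 : ∀ φ ∈ F, ∀ n, MemLp φ 2 (ν n)
  F_tendsto : ∀ φ ∈ F, Tendsto (fun n => ip (ν n) φ φ) atTop (𝓝 (ip (ν 0) φ φ))
  F_linear : ∀ φ ∈ F, ∀ ψ ∈ F, ∀ a b : ℝ, (fun x => a * φ x + b * ψ x) ∈ F
  F_dense : ∀ f : E → ℝ, Measurable f → MemLp f 2 (ν 0) → ∀ ε : ℝ, 0 < ε →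
    ∃ φ ∈ F, ip (ν 0) (fun x => f x - φ x) (fun x => f x - φ x) < ε

/-- The set `𝓓`: everywhere defined measurable functions lying in every `L²(E, ν n)`
whose `ν n`-norms converge to the `ν 0`-norm. -/
def Frame.D (fr : Frame E) : Set (E → ℝ) :=
  {φ | Measurable φ ∧ (∀ n, MemLp φ 2 (fr.ν n)) ∧
    Tendsto (fun n => ip (fr.ν n) φ φ) atTop (𝓝 (ip (fr.ν 0) φ φ))}

/-- The set `𝓒`: elements of `𝓓` satisfying conditions (c1) and (c2). -/
def Frame.C (fr : Frame E) : Set (E → ℝ) :=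
  {φ | φ ∈ fr.D ∧ (∀ n, 1 ≤ n → ∃ g ∈ fr.F, φ =ᵐ[fr.ν n] g) ∧
    ∀ ψ ∈ fr.F, Tendsto (fun n => ip (fr.ν n) φ ψ) atTop (𝓝 (ip (fr.ν 0) φ ψ))}

/-- The set `𝓥` of multipliers mapping `𝓓` into `𝓓` and `𝓕` into `𝓕`. -/
def Frame.V (fr : Frame E) : Set (E → ℝ) :=
  {ψ | Measurable ψ ∧ (∀ n, MemLp ψ 2 (fr.ν n)) ∧
    (∀ σ ∈ fr.D, (fun x => σ x * ψ x) ∈ fr.D) ∧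
    (∀ τ ∈ fr.F, (fun x => τ x * ψ x) ∈ fr.F)}

/-- `w`-convergence of a sequence `φs` (with `φs n` regarded as an element of
`L²(E, ν n)`) to `φ ∈ L²(E, ν 0)`. -/
def Frame.WConv (fr : Frame E) (φs : ℕ → E → ℝ) (φ : E → ℝ) : Prop :=
  ∀ ψ ∈ fr.C, Tendsto (fun n => ip (fr.ν n) (φs n) ψ) atTop (𝓝 (ip (fr.ν 0) φ ψ))

/-- `s`-convergence: `w`-convergence together with convergence of the norms. -/
def Frame.SConv (fr : Frame E) (φs : ℕ → E → ℝ) (φ : E → ℝ) : Prop :=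
  fr.WConv φs φ ∧
  Tendsto (fun n => ip (fr.ν n) (φs n) (φs n)) atTop (𝓝 (ip (fr.ν 0) φ φ))

/-! If the norms `a n = ⟨φs n, φs n⟩ₙ` were unbounded, put `w n = a n ^ (-3/4)` at the indices
`n > 0` where `a` reaches a new maximum, `w n = 0` elsewhere, and glue the functions `w n * φs n`
on the disjoint sets `En n`. The glued function `ψ` agrees `ν n`-a.e. with `w n * φs n`, so it
satisfies (c1), its norms `w n ^ 2 * a n ≤ a n ^ (-1/2)` tend to `0 = ⟨ψ, ψ⟩`, and by
Cauchy–Schwarz `⟨ψ, τ⟩ₙ → 0` for `τ ∈ 𝓕`; hence `ψ ∈ 𝓒`. But `⟨φs n, ψ⟩ₙ = w n * a n` equals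
`a n ^ (1/4)` at the new maxima, so it is unbounded and cannot converge. -/

open Set Function

lemma ip_comm (μ : Measure E) (f g : E → ℝ) : ip μ f g = ip μ g f := by
  simp only [ip, mul_comm]

lemma ip_const_mul_left (μ : Measure E) (c : ℝ) (f g : E → ℝ) :
    ip μ (fun x => c * f x) g = c * ip μ f g := by
  simp only [ip, mul_assoc, integral_const_mul]

lemma ip_congr_ae_left {μ : Measure E} {f f' : E → ℝ} (h : f =ᵐ[μ] f') (g : E → ℝ) :
    ip μ f g = ip μ f' g :=
  integral_congr_ae (h.mono fun x hx => by simp only [hx])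

lemma ip_eq_inner_toLp {μ : Measure E} {f g : E → ℝ} (hf : MemLp f 2 μ) (hg : MemLp g 2 μ) :
    ip μ f g = inner ℝ (hf.toLp f) (hg.toLp g) := by
  rw [L2.inner_def]
  refine integral_congr_ae ?_
  filter_upwards [hf.coeFn_toLp, hg.coeFn_toLp] with x hfx hgx
  simp [hfx, hgx, mul_comm]

lemma abs_ip_le_sqrt_mul_sqrt {μ : Measure E} {f g : E → ℝ} (hf : MemLp f 2 μ)
    (hg : MemLp g 2 μ) : |ip μ f g| ≤ √(ip μ f f) * √(ip μ g g) := by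
  rw [ip_eq_inner_toLp hf hg, ip_eq_inner_toLp hf hf, ip_eq_inner_toLp hg hg,
    real_inner_self_eq_norm_sq, real_inner_self_eq_norm_sq,
    Real.sqrt_sq (norm_nonneg _), Real.sqrt_sq (norm_nonneg _)]
  exact abs_real_inner_le_norm _ _

lemma tendsto_ip_zero_of_tendsto_ip_self_zero {ι : Type*} {l : Filter ι} {μ : ι → Measure E}
    {f g : E → ℝ} {c : ℝ} (hf : ∀ i, MemLp f 2 (μ i)) (hg : ∀ i, MemLp g 2 (μ i))
    (hff : Tendsto (fun i => ip (μ i) f f) l (𝓝 0))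
    (hgg : Tendsto (fun i => ip (μ i) g g) l (𝓝 c)) :
    Tendsto (fun i => ip (μ i) f g) l (𝓝 0) := by
  refine squeeze_zero_norm (fun i => abs_ip_le_sqrt_mul_sqrt (hf i) (hg i)) ?_
  simpa using hff.sqrt.mul hgg.sqrt

section Glue

variable {ι X : Type*} {S : ι → Set X} (f : ι → X → ℝ)

/-- For pairwise disjoint `S`, the function equal to `f i` on `S i` and to `0` off `⋃ i, S i`. -/
def glue (S : ι → Set X) (f : ι → X → ℝ) (x : X) : ℝ := ∑' i, (S i).indicator (f i) x

lemma glue_eq_of_mem (hS : Pairwise (Disjoint on S)) {i : ι} {x : X} (hx : x ∈ S i) :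
    glue S f x = f i x := by
  rw [glue, tsum_eq_single i fun j hj => indicator_of_notMem
    (disjoint_left.mp (hS hj).symm hx) _, indicator_of_mem hx]

lemma glue_ae_eq [MeasurableSpace X] (hS : Pairwise (Disjoint on S)) {μ : Measure X} {i : ι}
    (hμ : μ (S i)ᶜ = 0) :
    glue S f =ᵐ[μ] f i := by
  filter_upwards [mem_ae_iff.mpr hμ] with x hx using glue_eq_of_mem f hS hx

lemma measurable_glue [MeasurableSpace X] [Countable ι] (hS : ∀ i, MeasurableSet (S i))
    (hf : ∀ i, Measurable (f i)) : Measurable (glue S f) :=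
  Measurable.tsum fun i => (hf i).indicator (hS i)

end Glue

section HighScores

variable {a : ℕ → ℝ}

def highScores (a : ℕ → ℝ) : Set ℕ := {m | 0 < m ∧ ∀ j < m, a j < a m}

lemma exists_mem_highScores_gt (ha : ¬BddAbove (range a)) (M : ℝ) :
    ∃ m ∈ highScores a, M < a m := by
  classical
  have hex : ∃ m, max M (a 0) < a m := by
    obtain ⟨_, ⟨m, rfl⟩, hm⟩ := not_bddAbove_iff.mp ha (max M (a 0))
    exact ⟨m, hm⟩
  have hfind := Nat.find_spec hex
  refine ⟨Nat.find hex, ⟨Nat.pos_of_ne_zero fun h0 => ?_, fun j hj => ?_⟩, ?_⟩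
  · rw [h0] at hfind
    exact (le_max_right M (a 0)).not_gt hfind
  · exact (not_lt.mp (Nat.find_min hex hj)).trans_lt hfind
  · exact (le_max_left M (a 0)).trans_lt hfind

lemma highScores_infinite (ha : ¬BddAbove (range a)) : (highScores a).Infinite := fun hfin => by
  obtain ⟨M, hM⟩ := (hfin.image a).bddAbove
  obtain ⟨m, hm, hlt⟩ := exists_mem_highScores_gt ha M
  exact (hM (mem_image_of_mem a hm)).not_gt hlt

lemma tendsto_atTop_inf_principal_highScores (ha : ¬BddAbove (range a)) :
    Tendsto a (atTop ⊓ 𝓟 (highScores a)) atTop := by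
  refine tendsto_atTop.2 fun M => ?_
  obtain ⟨m₀, -, hm₀⟩ := exists_mem_highScores_gt ha M
  filter_upwards [mem_inf_of_left (eventually_gt_atTop m₀),
    mem_inf_of_right (mem_principal_self _)] with m hm hmK
  exact hm₀.le.trans (hmK.2 m₀ hm).le

lemma exists_weight_of_not_bddAbove (ha : ¬BddAbove (range a)) :
    ∃ w : ℕ → ℝ, w 0 = 0 ∧ Tendsto (fun m => w m ^ 2 * a m) atTop (𝓝 0) ∧
      ¬BddAbove (range fun m => w m * a m) := by
  set K := highScores a
  have hK : (atTop ⊓ 𝓟 K).NeBot :=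
    frequently_iff_neBot.1 (Nat.frequently_atTop_iff_infinite.2 (highScores_infinite ha))
  have hatop := tendsto_atTop_inf_principal_highScores ha
  have hpos : ∀ᶠ m in atTop ⊓ 𝓟 K, 0 < a m ∧ m ∈ K :=
    (hatop.eventually_gt_atTop 0).and (mem_inf_of_right (mem_principal_self K))
  refine ⟨K.indicator fun m => a m ^ (-(3 / 4) : ℝ), indicator_of_notMem (lt_irrefl 0 ·.1) _,
    ?_, ?_⟩
  · rw [← tendsto_inf_principal_nhds_iff_of_forall_eq (s := K) fun m hm => by simp [hm]]
    refine ((tendsto_rpow_neg_atTop (y := 1 / 2) (by norm_num)).comp hatop).congr' ?_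
    filter_upwards [hpos] with m ⟨hm, hmK⟩
    rw [comp_apply, indicator_of_mem hmK, ← Real.rpow_mul_natCast hm.le,
      ← Real.rpow_add_one hm.ne']
    norm_num
  · rintro ⟨M, hM⟩
    have hgrow : Tendsto (fun m => K.indicator (fun m => a m ^ (-(3 / 4) : ℝ)) m * a m)
        (atTop ⊓ 𝓟 K) atTop := by
      refine ((tendsto_rpow_atTop (y := 1 / 4) (by norm_num)).comp hatop).congr' ?_
      filter_upwards [hpos] with m ⟨hm, hmK⟩
      rw [comp_apply, indicator_of_mem hmK, ← Real.rpow_add_one hm.ne']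
      norm_num
    obtain ⟨m, hm⟩ := (hgrow.eventually_gt_atTop M).exists
    exact (hM (mem_range_self m)).not_gt hm

end HighScores

namespace Frame

variable (fr : Frame E)

lemma pairwise_disjoint_En : Pairwise (Disjoint on fr.En) := fun i j => fr.disjEn i j

lemma const_mul_mem_F {g : E → ℝ} (hg : g ∈ fr.F) (c : ℝ) : (fun x => c * g x) ∈ fr.F := by
  simpa using fr.F_linear g hg g hg c 0

lemma glue_ae_eq_En (f : ℕ → E → ℝ) (m : ℕ) : glue fr.En f =ᵐ[fr.ν m] f m :=
  glue_ae_eq f fr.pairwise_disjoint_En (fr.nullEn m)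

lemma ip_glue_left (w : ℕ → ℝ) (φs : ℕ → E → ℝ) (m : ℕ) (τ : E → ℝ) :
    ip (fr.ν m) (glue fr.En fun m x => w m * φs m x) τ = w m * ip (fr.ν m) (φs m) τ := by
  rw [ip_congr_ae_left (fr.glue_ae_eq_En _ m), ip_const_mul_left]

theorem glue_mem_C {φs : ℕ → E → ℝ} (hφs : ∀ n, φs n ∈ fr.C) {w : ℕ → ℝ} (hw0 : w 0 = 0)
    (hw : Tendsto (fun m => w m ^ 2 * ip (fr.ν m) (φs m) (φs m)) atTop (𝓝 0)) :
    glue fr.En (fun m x => w m * φs m x) ∈ fr.C := by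
  set ψ := glue fr.En fun m x => w m * φs m x
  have hL2 : ∀ m, MemLp ψ 2 (fr.ν m) := fun m =>
    (((hφs m).1.2.1 m).const_mul (w m)).ae_eq (fr.glue_ae_eq_En _ m).symm
  have hnorm : Tendsto (fun m => ip (fr.ν m) ψ ψ) atTop (𝓝 0) := by
    refine hw.congr fun m => ?_
    rw [fr.ip_glue_left, ip_comm _ _ ψ, fr.ip_glue_left]
    ring
  have hzero : ∀ τ, ip (fr.ν 0) ψ τ = 0 := fun τ => by rw [fr.ip_glue_left, hw0, zero_mul]
  refine ⟨⟨measurable_glue _ fr.measEn fun m => (hφs m).1.1.const_mul (w m), hL2, ?_⟩,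
    fun m hm => ?_, fun τ hτ => ?_⟩
  · rwa [hzero]
  · obtain ⟨g, hg, hφg⟩ := (hφs m).2.1 m hm
    exact ⟨_, fr.const_mul_mem_F hg (w m),
      (fr.glue_ae_eq_En _ m).trans (hφg.mono fun x hx => by simp only [hx])⟩
  · rw [hzero]
    exact tendsto_ip_zero_of_tendsto_ip_self_zero hL2 (fr.F_memL2 τ hτ) hnorm (fr.F_tendsto τ hτ)

end Frame

theorem wconv_norm_bounded_general (fr : Frame E) (φs : ℕ → E → ℝ) (hφs : ∀ n, φs n ∈ fr.C)
    (φ : E → ℝ) (hw : fr.WConv φs φ) :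
    ∃ M : ℝ, ∀ n, ip (fr.ν n) (φs n) (φs n) ≤ M := by
  suffices BddAbove (range fun n => ip (fr.ν n) (φs n) (φs n)) by
    obtain ⟨M, hM⟩ := this
    exact ⟨M, fun n => hM (mem_range_self n)⟩
  by_contra ha
  obtain ⟨w, hw0, hwa, hunbdd⟩ := exists_weight_of_not_bddAbove ha
  have hψ := hw _ (fr.glue_mem_C hφs hw0 hwa)
  simp only [ip_comm _ (φs _), fr.ip_glue_left] at hψ
  exact hunbdd hψ.bddAbove_range

/-- Proposition 2.3 (a): if a sequence `φs n ∈ 𝓒` `w`-converges to some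
`φ ∈ L²(E, ν)`, then the sequence of norms `⟨φs n, φs n⟩ₙ` is bounded. -/
theorem wconv_norm_bounded (fr : Frame E) (φs : ℕ → E → ℝ) (hφs : ∀ n, φs n ∈ fr.C)
    (φ : E → ℝ) (hφm : Measurable φ) (hφ2 : MemLp φ 2 (fr.ν 0)) (hw : fr.WConv φs φ) :
    ∃ M : ℝ, ∀ n, ip (fr.ν n) (φs n) (φs n) ≤ M :=
  wconv_norm_bounded_general fr φs hφs φ hw

end Mosco
end
end

section
/- Let ψ_n ∈ 𝓥, n ∈ ℕ, let ψ ∈ L^∞(E, ν), and assume that ψ_n ρ s-converges to ψρ for every ρ ∈ 𝓒. If φ_n ∈ 𝓒 s-converges to φ ∈ L²(E, ν), then φ_n ψ_n s-converges to φψ. -/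
open MeasureTheory Filter Topology

noncomputable section

namespace Mosco

variable {E : Type*} [MeasurableSpace E]

/-
The sequence `φs n` and its limit `φ` live on the mutually disjoint carriers `En n` of the
measures `ν n`, so they can be glued into one measurable function `ρ` that agrees with `φs n`
`ν n`-a.e. for `n ≥ 1` and with `φ` `ν 0`-a.e. The `s`-convergence of `φs` to `φ` then says that
`ρ` satisfies (c2) and lies in `𝓓`, and (c1) is inherited from the `φs n`; so `ρ ∈ 𝓒`. Now the
hypothesis on `ψs` applied to `ρ` is exactly the claim, up to `ν n`-null sets.
-/

theorem ip_congr_ae {μ : Measure E} {f f' g g' : E → ℝ} (hf : f =ᵐ[μ] f') (hg : g =ᵐ[μ] g') :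
    ip μ f g = ip μ f' g' :=
  integral_congr_ae (hf.mul hg)

theorem ip_add_add_self {μ : Measure E} {f g : E → ℝ} (hf : MemLp f 2 μ) (hg : MemLp g 2 μ) :
    ip μ (fun x => f x + g x) (fun x => f x + g x) = ip μ f f + 2 * ip μ f g + ip μ g g := by
  have hff : Integrable (fun x => f x * f x) μ := hf.integrable_mul hf
  have hfg : Integrable (fun x => f x * g x) μ := hf.integrable_mul hg
  have hgg : Integrable (fun x => g x * g x) μ := hg.integrable_mul hg
  have hexpand : (fun x => (f x + g x) * (f x + g x))
      = fun x => f x * f x + 2 * (f x * g x) + g x * g x := by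
    funext x; ring
  rw [ip, hexpand, integral_add _ hgg, integral_add hff (hfg.const_mul 2), integral_const_mul]
  · rfl
  · exact hff.add (hfg.const_mul 2)

theorem exists_measurable_ae_eq_of_pairwise_disjoint {ι β : Type*} [Countable ι] [Nonempty ι]
    [MeasurableSpace β] {μ : ι → Measure E} {s : ι → Set E} (hs : ∀ i, MeasurableSet (s i))
    (hdisj : Pairwise fun i j => Disjoint (s i) (s j)) (hμs : ∀ i, μ i (s i)ᶜ = 0) {f : ι → E → β}
    (hf : ∀ i, Measurable (f i)) : ∃ g : E → β, Measurable g ∧ ∀ i, g =ᵐ[μ i] f i := by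
  obtain ⟨g, hgm, hg⟩ := exists_measurable_piecewise s hs f hf fun i j hij x hx =>
    absurd (hdisj hij).inter_eq (Set.nonempty_of_mem hx).ne_empty
  exact ⟨g, hgm, fun i => mem_of_superset (mem_ae_iff.2 (hμs i)) fun _ hx => hg i hx⟩

namespace Frame

variable {fr : Frame E}

theorem F_subset_C : fr.F ⊆ fr.C := by
  intro τ hτ
  refine ⟨⟨fr.F_measurable τ hτ, fr.F_memL2 τ hτ, fr.F_tendsto τ hτ⟩,
    fun n _ => ⟨τ, hτ, EventuallyEq.rfl⟩, fun σ hσ => ?_⟩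
  have hsum := fr.F_tendsto _ (fr.F_linear τ hτ σ hσ 1 1)
  simp only [one_mul] at hsum
  have hpolar : ∀ n, ip (fr.ν n) τ σ = (ip (fr.ν n) (fun x => τ x + σ x) (fun x => τ x + σ x)
      - ip (fr.ν n) τ τ - ip (fr.ν n) σ σ) / 2 := fun n => by
    rw [ip_add_add_self (fr.F_memL2 τ hτ n) (fr.F_memL2 σ hσ n)]
    ring
  simp only [hpolar]
  exact ((hsum.sub (fr.F_tendsto τ hτ)).sub (fr.F_tendsto σ hσ)).div_const 2

theorem SConv.congr_ae {φs χs : ℕ → E → ℝ} {φ χ : E → ℝ} (h : fr.SConv φs φ)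
    (hs : ∀ᶠ n in atTop, φs n =ᵐ[fr.ν n] χs n) (h0 : φ =ᵐ[fr.ν 0] χ) : fr.SConv χs χ := by
  refine ⟨fun ψ hψ => ?_, ?_⟩
  · rw [← ip_congr_ae h0 EventuallyEq.rfl]
    exact (h.1 ψ hψ).congr' (hs.mono fun n hn => ip_congr_ae hn EventuallyEq.rfl)
  · rw [← ip_congr_ae h0 h0]
    exact h.2.congr' (hs.mono fun n hn => ip_congr_ae hn hn)

theorem mem_C_of_sconv_const {ρ : E → ℝ} (hρm : Measurable ρ) (hρ2 : ∀ n, MemLp ρ 2 (fr.ν n))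
    (hρF : ∀ n, 1 ≤ n → ∃ g ∈ fr.F, ρ =ᵐ[fr.ν n] g) (hρ : fr.SConv (fun _ => ρ) ρ) :
    ρ ∈ fr.C :=
  ⟨⟨hρm, hρ2, hρ.2⟩, hρF, fun ψ hψ => hρ.1 ψ (F_subset_C hψ)⟩

end Frame

theorem sconv_mul_general (fr : Frame E) (ψs : ℕ → E → ℝ) (ψ : E → ℝ)
    (hsρ : ∀ ρ ∈ fr.C, fr.SConv (fun n x => ψs n x * ρ x) (fun x => ψ x * ρ x))
    (φs : ℕ → E → ℝ) (hφs : ∀ n, φs n ∈ fr.C)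
    (φ : E → ℝ) (hφm : Measurable φ) (hφ2 : MemLp φ 2 (fr.ν 0)) (hs : fr.SConv φs φ) :
    fr.SConv (fun n x => φs n x * ψs n x) (fun x => φ x * ψ x) := by
  obtain ⟨ρ, hρm, hρ⟩ := exists_measurable_ae_eq_of_pairwise_disjoint fr.measEn fr.disjEn
    fr.nullEn (f := fun n => if n = 0 then φ else φs n)
    fun n => by split_ifs; exacts [hφm, (hφs n).1.1]
  have hρ0 : ρ =ᵐ[fr.ν 0] φ := by simpa using hρ 0
  have hρs : ∀ n, 1 ≤ n → ρ =ᵐ[fr.ν n] φs n := fun n hn => by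
    simpa [Nat.one_le_iff_ne_zero.1 hn] using hρ n
  have hρC : ρ ∈ fr.C := by
    refine Frame.mem_C_of_sconv_const hρm (fun n => ?_) (fun n hn => ?_) ?_
    · rcases Nat.eq_zero_or_pos n with rfl | hn
      · exact hφ2.ae_eq hρ0.symm
      · exact ((hφs n).1.2.1 n).ae_eq (hρs n hn).symm
    · obtain ⟨g, hg, hφg⟩ := (hφs n).2.1 n hn
      exact ⟨g, hg, (hρs n hn).trans hφg⟩
    · exact hs.congr_ae ((eventually_ge_atTop 1).mono fun n hn => (hρs n hn).symm) hρ0.symm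
  refine (hsρ ρ hρC).congr_ae ((eventually_ge_atTop 1).mono fun n hn => ?_) ?_
  · filter_upwards [hρs n hn] with x hx
    rw [hx, mul_comm]
  · filter_upwards [hρ0] with x hx
    rw [hx, mul_comm]

/-- Proposition 2.3 (g): let `ψs n ∈ 𝓥`, `ψ ∈ L^∞(E, ν)`, and assume `ψs n · ρ`
`s`-converges to `ψ · ρ` for every `ρ ∈ 𝓒`.  If `φs n ∈ 𝓒` `s`-converges to
`φ ∈ L²(E, ν)`, then `φs n · ψs n` `s`-converges to `φ · ψ`. -/
theorem sconv_mul (fr : Frame E) (ψs : ℕ → E → ℝ) (hψs : ∀ n, ψs n ∈ fr.V)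
    (ψ : E → ℝ) (hψm : Measurable ψ) (hψ_inf : MemLp ψ ⊤ (fr.ν 0))
    (hsρ : ∀ ρ ∈ fr.C, fr.SConv (fun n x => ψs n x * ρ x) (fun x => ψ x * ρ x))
    (φs : ℕ → E → ℝ) (hφs : ∀ n, φs n ∈ fr.C)
    (φ : E → ℝ) (hφm : Measurable φ) (hφ2 : MemLp φ 2 (fr.ν 0)) (hs : fr.SConv φs φ) :
    fr.SConv (fun n x => φs n x * ψs n x) (fun x => φ x * ψ x) :=
  sconv_mul_general fr ψs ψ hsρ φs hφs φ hφm hφ2 hs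

end Mosco
end
end
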